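/- Let m be even and A, B sub-symmetric m-th order n-dimensional tensors. The SOCTEiCP (find nonzero x ∈ K, λ ∈ R with w := λ A x^{m-1} − B x^{m-1} ∈ K and ⟨x,w⟩ = 0) has a solution if and only if the nonlinear program: minimize f(x,y,w,λ) := ‖y − λ^{1/(m-1)} x‖² + (x^T w)² subject to w − A y^{m-1} + B x^{m-1} = 0, x ∈ K, w ∈ K, e^T x = 1, e^T y = λ^{1/(m-1)}, has a global minimum with optimal objective value zero. -/

import Mathlib

/-- Index type of `ℝ^{n₁} × ⋯ × ℝ^{n_r}` with blocks of sizes `n i + 1`;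
`⟨i, 0⟩` is the head index of block `i`. -/
abbrev BIdx {r : ℕ} (n : Fin r → ℕ) := (i : Fin r) × Fin (n i + 1)

/-- Membership in the product of second-order cones `K = K^{n₁} × ⋯ × K^{n_r}`. -/
def inK {r : ℕ} (n : Fin r → ℕ) (x : BIdx n → ℝ) : Prop :=
  ∀ i, Real.sqrt (∑ j : Fin (n i), x ⟨i, j.succ⟩ ^ 2) ≤ x ⟨i, 0⟩

/-- `eᵀx = ∑ᵢ x^i₀`, the sum of the head components of `x`. -/
def eT {r : ℕ} (n : Fin r → ℕ) (x : BIdx n → ℝ) : ℝ := ∑ i, x ⟨i, 0⟩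


/-- `A x^{m} = ∑ a_{i₁…i_m} x_{i₁} ⋯ x_{i_m}`. -/
def tpow {m : ℕ} {ι : Type*} [Fintype ι] (A : (Fin m → ι) → ℝ) (x : ι → ℝ) : ℝ :=
  ∑ f : Fin m → ι, A f * ∏ j, x (f j)

/-- `(A x^{m})_k = ∑_{i₂,…,i_{m+1}} a_{k i₂…i_{m+1}} x_{i₂} ⋯ x_{i_{m+1}}`. -/
def tmap {m : ℕ} {ι : Type*} [Fintype ι] (A : (Fin (m + 1) → ι) → ℝ) (x : ι → ℝ)
    (k : ι) : ℝ :=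
  ∑ f : Fin m → ι, A (Fin.cons k f) * ∏ j, x (f j)

/-- A tensor of order `m + 1` is sub-symmetric if, for each fixed first index,
it is invariant under permutations of its last `m` indices. -/
def SubSymm {m : ℕ} {ι : Type*} (A : (Fin (m + 1) → ι) → ℝ) : Prop :=
  ∀ (k : ι) (σ : Equiv.Perm (Fin m)) (f : Fin m → ι),
    A (Fin.cons k (f ∘ σ)) = A (Fin.cons k f)

/-- The real `k`-th root (for odd `k` this is the unique real `k`-th root). -/
noncomputable def oddRoot (k : ℕ) (t : ℝ) : ℝ := Real.sign t * |t| ^ ((1 : ℝ) / k)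

/-!
Both problems are invariant under the scaling `x ↦ t x`, `y ↦ t y`, `w ↦ t^m w` with `t > 0`,
because `A (t x)^m = t^m A x^m` and `K` is a cone. A nonzero `x ∈ K` has `eᵀx > 0`, so a solution
of the SOCTEiCP can be normalized to `eᵀx = 1`; with `y = λ^{1/m} x` and `w = λ A x^m - B x^m` it is
then a feasible point of objective zero, hence a global minimizer of the nonnegative objective.
Conversely, objective zero forces `y = λ^{1/m} x` and `xᵀw = 0`, and since `m` is odd
`A y^m = λ A x^m`, so the constraint says `w = λ A x^m - B x^m`.
-/

open Finset

lemma tmap_smul {m : ℕ} {ι : Type*} [Fintype ι] (A : (Fin (m + 1) → ι) → ℝ) (c : ℝ)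
    (x : ι → ℝ) (k : ι) : tmap A (c • x) k = c ^ m * tmap A x k := by
  simp only [tmap, Pi.smul_apply, smul_eq_mul, prod_mul_distrib, prod_const, card_univ,
    Fintype.card_fin, mul_sum]
  exact sum_congr rfl fun f _ => by ring

lemma oddRoot_pow {m : ℕ} (hm : Odd m) (t : ℝ) : oddRoot m t ^ m = t := by
  have hm0 : (m : ℝ) ≠ 0 := by exact_mod_cast hm.pos.ne'
  rw [oddRoot, mul_pow, ← Real.rpow_natCast (|t| ^ ((1 : ℝ) / m)) m,
    ← Real.rpow_mul (abs_nonneg t), one_div_mul_cancel hm0, Real.rpow_one]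
  rcases lt_trichotomy t 0 with h | rfl | h
  · rw [Real.sign_of_neg h, hm.neg_one_pow, abs_of_neg h, neg_one_mul, neg_neg]
  · simp
  · rw [Real.sign_of_pos h, one_pow, abs_of_pos h, one_mul]

lemma tmap_oddRoot_smul {m : ℕ} (hm : Odd m) {ι : Type*} [Fintype ι]
    (A : (Fin (m + 1) → ι) → ℝ) (lam : ℝ) (x : ι → ℝ) (k : ι) :
    tmap A (oddRoot m lam • x) k = lam * tmap A x k := by
  rw [tmap_smul, oddRoot_pow hm]

section SecondOrderCone

variable {r : ℕ} {n : Fin r → ℕ} {x : BIdx n → ℝ}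

lemma inK_smul {c : ℝ} (hc : 0 ≤ c) (hx : inK n x) : inK n (c • x) := by
  intro i
  have hsum : ∑ j : Fin (n i), (c • x) ⟨i, j.succ⟩ ^ 2 =
      c ^ 2 * ∑ j : Fin (n i), x ⟨i, j.succ⟩ ^ 2 := by
    simp only [Pi.smul_apply, smul_eq_mul, mul_pow, mul_sum]
  rw [hsum, Real.sqrt_mul (sq_nonneg c), Real.sqrt_sq hc]
  exact mul_le_mul_of_nonneg_left (hx i) hc

lemma inK.head_nonneg (hx : inK n x) (i : Fin r) : 0 ≤ x ⟨i, 0⟩ :=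
  (Real.sqrt_nonneg _).trans (hx i)

lemma inK.eq_zero_of_head_eq_zero (hx : inK n x) (i : Fin r) (h0 : x ⟨i, 0⟩ = 0)
    (j : Fin (n i + 1)) : x ⟨i, j⟩ = 0 := by
  have htail : ∑ j : Fin (n i), x ⟨i, j.succ⟩ ^ 2 = 0 := by
    have := hx i
    rw [h0] at this
    exact (Real.sqrt_eq_zero (sum_nonneg fun _ _ => sq_nonneg _)).1
      (le_antisymm this (Real.sqrt_nonneg _))
  cases j using Fin.cases with
  | zero => exact h0
  | succ j => exact pow_eq_zero_iff two_ne_zero |>.1 <|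
      (sum_eq_zero_iff_of_nonneg fun _ _ => sq_nonneg _).1 htail j (mem_univ j)

lemma inK.eT_pos (hx : inK n x) (hne : x ≠ 0) : 0 < eT n x := by
  refine (sum_nonneg fun i _ => hx.head_nonneg i).lt_of_ne fun h => hne ?_
  have hhead := (sum_eq_zero_iff_of_nonneg fun i _ => hx.head_nonneg i).1 h.symm
  funext ⟨i, j⟩
  exact hx.eq_zero_of_head_eq_zero i (hhead i (mem_univ i)) j

lemma eT_smul (c : ℝ) (x : BIdx n → ℝ) : eT n (c • x) = c * eT n x := by
  simp only [eT, Pi.smul_apply, smul_eq_mul, mul_sum]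

end SecondOrderCone

def eigenResidual {m : ℕ} {ι : Type*} [Fintype ι] (A B : (Fin (m + 1) → ι) → ℝ) (lam : ℝ)
    (x : ι → ℝ) : ι → ℝ :=
  fun k => lam * tmap A x k - tmap B x k

lemma eigenResidual_smul {m : ℕ} {ι : Type*} [Fintype ι] (A B : (Fin (m + 1) → ι) → ℝ)
    (lam c : ℝ) (x : ι → ℝ) :
    eigenResidual A B lam (c • x) = c ^ m • eigenResidual A B lam x := by
  funext k
  simp only [eigenResidual, tmap_smul, Pi.smul_apply, smul_eq_mul]
  ring

lemma sum_mul_eigenResidual_smul {m : ℕ} {ι : Type*} [Fintype ι] (A B : (Fin (m + 1) → ι) → ℝ)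
    (lam c : ℝ) (x : ι → ℝ) :
    ∑ k, (c • x) k * eigenResidual A B lam (c • x) k =
      c ^ (m + 1) * ∑ k, x k * eigenResidual A B lam x k := by
  simp only [eigenResidual_smul, Pi.smul_apply, smul_eq_mul, mul_sum]
  exact sum_congr rfl fun k _ => by ring

lemma sum_sq_sub_mul_add_sq_eq_zero_iff {ι : Type*} [Fintype ι] {x y : ι → ℝ} {c s : ℝ} :
    (∑ k, (y k - c * x k) ^ 2) + s ^ 2 = 0 ↔ y = c • x ∧ s = 0 := by
  have hsum : 0 ≤ ∑ k, (y k - c * x k) ^ 2 := by positivity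
  rw [add_eq_zero_iff_of_nonneg hsum (sq_nonneg s),
    sum_eq_zero_iff_of_nonneg fun _ _ => sq_nonneg _, pow_eq_zero_iff two_ne_zero, funext_iff]
  simp only [mem_univ, true_implies, pow_eq_zero_iff two_ne_zero, sub_eq_zero, Pi.smul_apply,
    smul_eq_mul]

theorem subsymmetric_socteicp_iff_nlp_general {r : ℕ} (n : Fin r → ℕ) {m : ℕ} (hm : Odd m)
    (A B : (Fin (m + 1) → BIdx n) → ℝ) :
    (∃ (x : BIdx n → ℝ) (lam : ℝ), x ≠ 0 ∧ inK n x ∧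
        inK n (fun k => lam * tmap A x k - tmap B x k) ∧
        ∑ k, x k * (lam * tmap A x k - tmap B x k) = 0) ↔
      (∃ (x y w : BIdx n → ℝ) (lam : ℝ),
        ((∀ k, w k - tmap A y k + tmap B x k = 0) ∧ inK n x ∧ inK n w ∧
            eT n x = 1 ∧ eT n y = oddRoot m lam) ∧
          (∑ k, (y k - oddRoot m lam * x k) ^ 2) + (∑ k, x k * w k) ^ 2 = 0 ∧
          ∀ (x' y' w' : BIdx n → ℝ) (lam' : ℝ),
            ((∀ k, w' k - tmap A y' k + tmap B x' k = 0) ∧ inK n x' ∧ inK n w' ∧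
                eT n x' = 1 ∧ eT n y' = oddRoot m lam') →
              (∑ k, (y k - oddRoot m lam * x k) ^ 2) + (∑ k, x k * w k) ^ 2 ≤
                (∑ k, (y' k - oddRoot m lam' * x' k) ^ 2) + (∑ k, x' k * w' k) ^ 2) := by
  constructor
  · rintro ⟨x, lam, hx0, hxK, hwK, hxw⟩
    have hpos := hxK.eT_pos hx0
    set t := (eT n x)⁻¹
    have ht : 0 ≤ t := inv_nonneg.2 hpos.le
    have hex : eT n (t • x) = 1 := by rw [eT_smul, inv_mul_cancel₀ hpos.ne']
    have hxw' : ∑ k, (t • x) k * eigenResidual A B lam (t • x) k = 0 := by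
      rw [sum_mul_eigenResidual_smul]
      exact mul_eq_zero_of_right _ hxw
    have hobj : (∑ k, ((oddRoot m lam • t • x) k - oddRoot m lam * (t • x) k) ^ 2) +
        (∑ k, (t • x) k * eigenResidual A B lam (t • x) k) ^ 2 = 0 :=
      sum_sq_sub_mul_add_sq_eq_zero_iff.2 ⟨rfl, hxw'⟩
    refine ⟨t • x, oddRoot m lam • t • x, eigenResidual A B lam (t • x), lam,
      ⟨fun k => ?_, inK_smul ht hxK, ?_, hex, by rw [eT_smul, hex, mul_one]⟩, hobj,
      fun _ _ _ _ _ => hobj ▸ by positivity⟩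
    · rw [tmap_oddRoot_smul hm, eigenResidual]
      ring
    · rw [eigenResidual_smul]
      exact inK_smul (pow_nonneg ht m) hwK
  · rintro ⟨x, y, w, lam, ⟨hfeas, hxK, hwK, hex, -⟩, hobj, -⟩
    obtain ⟨rfl, hxw⟩ := sum_sq_sub_mul_add_sq_eq_zero_iff.1 hobj
    have hw : ∀ k, lam * tmap A x k - tmap B x k = w k := fun k => by
      have := hfeas k
      rw [tmap_oddRoot_smul hm] at this
      linarith
    refine ⟨x, lam, ?_, hxK, by simpa only [hw] using hwK, by simpa only [hw] using hxw⟩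
    rintro rfl
    simp [eT] at hex

/-- For sub-symmetric tensors `A, B` of even order `m + 1` (i.e. `m` odd), the
SOCTEiCP has a solution iff the nonlinear program
`min ‖y - λ^{1/m} x‖² + (xᵀw)²` s.t. `w - A y^m + B x^m = 0`, `x ∈ K`, `w ∈ K`,
`eᵀx = 1`, `eᵀy = λ^{1/m}` has a global minimum with objective value zero. -/
theorem subsymmetric_socteicp_iff_nlp {r : ℕ} (n : Fin r → ℕ) {m : ℕ} (hm : Odd m)
    (A B : (Fin (m + 1) → BIdx n) → ℝ) (hA : SubSymm A) (hB : SubSymm B) :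
    (∃ (x : BIdx n → ℝ) (lam : ℝ), x ≠ 0 ∧ inK n x ∧
        inK n (fun k => lam * tmap A x k - tmap B x k) ∧
        ∑ k, x k * (lam * tmap A x k - tmap B x k) = 0) ↔
      (∃ (x y w : BIdx n → ℝ) (lam : ℝ),
        ((∀ k, w k - tmap A y k + tmap B x k = 0) ∧ inK n x ∧ inK n w ∧
            eT n x = 1 ∧ eT n y = oddRoot m lam) ∧
          (∑ k, (y k - oddRoot m lam * x k) ^ 2) + (∑ k, x k * w k) ^ 2 = 0 ∧
          ∀ (x' y' w' : BIdx n → ℝ) (lam' : ℝ),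
            ((∀ k, w' k - tmap A y' k + tmap B x' k = 0) ∧ inK n x' ∧ inK n w' ∧
                eT n x' = 1 ∧ eT n y' = oddRoot m lam') →
              (∑ k, (y k - oddRoot m lam * x k) ^ 2) + (∑ k, x k * w k) ^ 2 ≤
                (∑ k, (y' k - oddRoot m lam' * x' k) ^ 2) + (∑ k, x' k * w' k) ^ 2) :=
  subsymmetric_socteicp_iff_nlp_general n hm A B
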